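/- (Descent property of the singular-value penalized iteration, logistic case) Let Θ be a threshold function, λ ≥ 0, and suppose there is L_Θ ∈ [0,1] such that u ↦ sup{t : Θ(t;λ) ≤ u} − (1−L_Θ)u is nondecreasing on (0,∞); let P satisfy condition (constrP) for Θ. Let Y = [y_{ik}] ∈ ℝ^{n×m} with all y_{ik} ∈ {0,1} and X = [x₁,…,x_n]ᵀ ∈ ℝ^{n×p}, and assume ‖X‖₂² < 4(2 − L_Θ). Starting from any B⁽⁰⁾ ∈ ℝ^{p×m}, define iteratively B⁽ʲ⁺¹⁾ = Θ^σ( B⁽ʲ⁾ + XᵀY − Xᵀμ(B⁽ʲ⁾); λ ), where μ(B) = [1/(1+exp(−x_iᵀ b_k))]_{n×m} for B = [b₁,…,b_m]. Then the objective F(B) = −Σ_{k=1}^m Σ_{i=1}^n ( y_{ik} x_iᵀ b_k − log(1 + exp(x_iᵀ b_k)) ) + Σ_s P(σ_s(B);λ) satisfies, for all j ≥ 1, F(B⁽ʲ⁾) − F(B⁽ʲ⁺¹⁾) ≥ (C/2)‖B⁽ʲ⁾ − B⁽ʲ⁺¹⁾‖_F² with C = 2 − L_Θ − ‖X‖₂²/4;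 in particular F(B⁽ʲ⁾) is nonincreasing. -/

import Mathlib

open Matrix

/-- Squared Frobenius norm of a real matrix. -/
def frobSq {n m : ℕ} (A : Matrix (Fin n) (Fin m) ℝ) : ℝ := ∑ i, ∑ j, A i j ^ 2

/-- `(U, σ, V)` is a (reduced) singular value decomposition of the real `n × m` matrix `B`. -/
def IsSVD {n m k : ℕ} (B : Matrix (Fin n) (Fin m) ℝ) (U : Matrix (Fin n) (Fin k) ℝ)
    (σ : Fin k → ℝ) (V : Matrix (Fin m) (Fin k) ℝ) : Prop :=
  Uᵀ * U = 1 ∧ Vᵀ * V = 1 ∧ Antitone σ ∧ (∀ i, 0 ≤ σ i) ∧ B = U * diagonal σ * Vᵀ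

/-- A threshold function `Θ(t; λ)`. -/
def IsThresholdFunction (Θ : ℝ → ℝ → ℝ) : Prop :=
  ∀ lam : ℝ, 0 ≤ lam →
    (∀ t : ℝ, Θ (-t) lam = -Θ t lam) ∧
    (Monotone fun t => Θ t lam) ∧
    Filter.Tendsto (fun t => Θ t lam) Filter.atTop Filter.atTop ∧
    (∀ t : ℝ, 0 ≤ t → 0 ≤ Θ t lam ∧ Θ t lam ≤ t)

/-- The squared spectral norm `‖X‖₂²` of a real matrix. -/
noncomputable def spectralNormSq {n p : ℕ} (X : Matrix (Fin n) (Fin p) ℝ) : ℝ :=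
  ‖LinearMap.toContinuousLinearMap (Matrix.toEuclideanLin X)‖ ^ 2

/-- The logistic mean matrix `μ(B) = [1/(1+exp(−x_iᵀ b_k))]_{n×m}`. -/
noncomputable def logisticMu {n p m : ℕ} (X : Matrix (Fin n) (Fin p) ℝ)
    (B : Matrix (Fin p) (Fin m) ℝ) : Matrix (Fin n) (Fin m) ℝ :=
  Matrix.of fun i k => 1 / (1 + Real.exp (-(X * B) i k))

/-- The negative log-likelihood of the vector logistic model:
`−∑_k ∑_i ( y_{ik} x_iᵀ b_k − log(1 + exp(x_iᵀ b_k)) )`. -/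
noncomputable def logisticNegLogLik {n p m : ℕ} (X : Matrix (Fin n) (Fin p) ℝ)
    (Y : Matrix (Fin n) (Fin m) ℝ) (B : Matrix (Fin p) (Fin m) ℝ) : ℝ :=
  -∑ k, ∑ i, (Y i k * (X * B) i k - Real.log (1 + Real.exp ((X * B) i k)))

/-
The logistic loss `ℓ` is a sum of softplus terms `log (1 + exp t)` in the entries of `X B`, whose
second derivative `σ (1 - σ)` is at most `1/4`; hence
`ℓ B' ≤ ℓ B + ⟪∇ℓ B, B' - B⟫ + ‖X‖₂² / 8 * ‖B' - B‖_F²`.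

The next iterate thresholds the singular values of `Ξ = B - ∇ℓ B`. On scalars, monotonicity of
`u ↦ Θ⁻¹ u - (1 - L) u` bounds the integrand of the penalty by an affine function on either side
of `Θ a`, which gives `(a - Θ a)²/2 + P (Θ a) + (1 - L)/2 (b - Θ a)² ≤ (a - b)²/2 + P b` for
`a, b ≥ 0`. This lifts to matrices because `⟪U diag c Vᵀ, U' diag d V'ᵀ⟫ = ∑ c_i d_j W_ij`, where
`W = (UᵀU') ⊙ (VᵀV')` has absolute row and column sums at most `1` by Bessel's inequality: written
as `c_i d_j ≤ α_i + β_j`, the scalar inequality sums to the matrix one. Adding it, taken at `Ξ`,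
to the majorization of `ℓ` gives the descent.
-/

open Real Set Filter Topology intervalIntegral

lemma Real.sigmoid_mul_one_sub_le (x : ℝ) : sigmoid x * (1 - sigmoid x) ≤ 1 / 4 := by
  nlinarith [sq_nonneg (2 * sigmoid x - 1)]

lemma Real.monotone_div_four_sub_sigmoid : Monotone fun x => x / 4 - sigmoid x :=
  monotone_of_hasDerivAt_nonneg
    (fun x => ((hasDerivAt_id x).div_const 4).sub (hasDerivAt_sigmoid x))
    fun x => by simpa using sigmoid_mul_one_sub_le x

lemma Real.hasDerivAt_log_one_add_exp (x : ℝ) :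
    HasDerivAt (fun x => log (1 + exp x)) (sigmoid x) x := by
  convert ((hasDerivAt_exp x).const_add 1).log (by positivity) using 1
  rw [sigmoid_def, exp_neg]
  field_simp
  ring

lemma Real.log_one_add_exp_le (t x : ℝ) :
    log (1 + exp x) ≤ log (1 + exp t) + sigmoid t * (x - t) + (x - t) ^ 2 / 8 := by
  set k : ℝ → ℝ := fun x => log (1 + exp x) - sigmoid t * (x - t) - (x - t) ^ 2 / 8
  have hk : ∀ x, HasDerivAt k ((t / 4 - sigmoid t) - (x / 4 - sigmoid x)) x := fun x => by
    refine (((hasDerivAt_log_one_add_exp x).sub (((hasDerivAt_id x).sub_const t).const_mul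
      (sigmoid t))).sub ((((hasDerivAt_id x).sub_const t).pow 2).div_const 8)).congr_deriv ?_
    simp only [id, Nat.cast_ofNat]
    ring
  have hcont : Continuous k := continuous_iff_continuousAt.2 fun x => (hk x).continuousAt
  suffices k x ≤ k t by simp only [k, sub_self] at this; linarith
  rcases le_total t x with htx | hxt
  · refine antitoneOn_of_hasDerivWithinAt_nonpos (convex_Ici t) hcont.continuousOn
      (fun y _ => (hk y).hasDerivWithinAt) (fun y hy => ?_) self_mem_Ici htx htx
    rw [interior_Ici] at hy
    exact sub_nonpos.2 (monotone_div_four_sub_sigmoid (le_of_lt hy))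
  · refine monotoneOn_of_hasDerivWithinAt_nonneg (convex_Iic t) hcont.continuousOn
      (fun y _ => (hk y).hasDerivWithinAt) (fun y hy => ?_) hxt self_mem_Iic hxt
    rw [interior_Iic] at hy
    exact sub_nonneg.2 (monotone_div_four_sub_sigmoid (le_of_lt hy))

def frobInner {ι κ : Type*} [Fintype ι] [Fintype κ] (A B : Matrix ι κ ℝ) : ℝ :=
  ∑ i, ∑ j, A i j * B i j

section Frobenius

variable {ι κ ν : Type*}

lemma frobInner_comm [Fintype ι] [Fintype κ] (A B : Matrix ι κ ℝ) :
    frobInner A B = frobInner B A := by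
  simp only [frobInner, mul_comm]

lemma frobInner_eq_trace [Fintype ι] [Fintype κ] (A B : Matrix ι κ ℝ) :
    frobInner A B = trace (Aᵀ * B) := by
  simp only [frobInner, trace, diag, mul_apply, transpose_apply]
  exact Finset.sum_comm

lemma frobInner_transpose_mul_left [Fintype ι] [Fintype κ] [Fintype ν] (X : Matrix ι κ ℝ)
    (M : Matrix ι ν ℝ) (D : Matrix κ ν ℝ) :
    frobInner (Xᵀ * M) D = frobInner M (X * D) := by
  rw [frobInner_eq_trace, frobInner_eq_trace, transpose_mul, transpose_transpose, Matrix.mul_assoc]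

lemma frobInner_svd [Fintype ι] [Fintype κ] [Fintype ν] [DecidableEq ν] (U U' : Matrix ι ν ℝ)
    (V V' : Matrix κ ν ℝ) (c d : ν → ℝ) :
    frobInner (U * diagonal c * Vᵀ) (U' * diagonal d * V'ᵀ)
      = ∑ i, ∑ j, c i * d j * ((Uᵀ * U') ⊙ (Vᵀ * V')) i j := by
  have h : (U * diagonal c * Vᵀ)ᵀ * (U' * diagonal d * V'ᵀ)
      = V * (diagonal c * (Uᵀ * U') * diagonal d * V'ᵀ) := by
    simp only [transpose_mul, transpose_transpose, diagonal_transpose, Matrix.mul_assoc]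
  have hV : V'ᵀ * V = (Vᵀ * V')ᵀ := by rw [transpose_mul, transpose_transpose]
  rw [frobInner_eq_trace, h, trace_mul_comm, Matrix.mul_assoc _ V'ᵀ, hV]
  simp only [trace, diag, mul_apply, diagonal_apply, ite_mul, zero_mul, mul_ite, mul_zero,
    Finset.sum_ite_eq, Finset.sum_ite_eq', Finset.mem_univ, if_true, transpose_apply,
    hadamard_apply]
  exact Finset.sum_congr rfl fun i _ => Finset.sum_congr rfl fun j _ => by ring

-- Bessel's inequality for the columns of `U'` tested against a column of `U`.
lemma sum_sq_transpose_mul_apply_le {ν' : Type*} [Fintype κ] [Fintype ν] [DecidableEq ν]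
    {U : Matrix κ ν' ℝ} {U' : Matrix κ ν ℝ} (hU' : U'ᵀ * U' = 1) (i : ν') :
    ∑ j, (Uᵀ * U') i j ^ 2 ≤ (Uᵀ * U) i i := by
  have hv : Orthonormal ℝ fun j => WithLp.toLp 2 fun t => U' t j := by
    refine orthonormal_iff_ite.2 fun j j' => ?_
    rw [EuclideanSpace.inner_toLp_toLp, ← one_apply, ← hU']
    simp only [dotProduct, mul_apply, transpose_apply, star_trivial, mul_comm]
  have h := hv.sum_inner_products_le (WithLp.toLp 2 fun t => U t i) (s := Finset.univ)
  simp only [EuclideanSpace.inner_toLp_toLp, EuclideanSpace.real_norm_sq_eq, Real.norm_eq_abs,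
    sq_abs, dotProduct, star_trivial] at h
  simpa only [mul_apply, transpose_apply, sq, mul_comm] using h

lemma sum_abs_hadamard_apply_le_one [Fintype κ] {R S : Matrix ι κ ℝ} {i : ι}
    (hR : ∑ j, R i j ^ 2 ≤ 1) (hS : ∑ j, S i j ^ 2 ≤ 1) : ∑ j, |(R ⊙ S) i j| ≤ 1 :=
  calc ∑ j, |(R ⊙ S) i j| ≤ ∑ j, (R i j ^ 2 + S i j ^ 2) / 2 :=
        Finset.sum_le_sum fun j _ => by
          rw [hadamard_apply, abs_mul, ← sq_abs (R i j), ← sq_abs (S i j)]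
          nlinarith [sq_nonneg (|R i j| - |S i j|)]
    _ ≤ 1 := by rw [← Finset.sum_div, Finset.sum_add_distrib]; linarith

lemma sum_abs_hadamard_transpose_mul_le_one {κ' : Type*} [Fintype κ] [Fintype κ'] [Fintype ν]
    [DecidableEq ν] {U U' : Matrix κ ν ℝ} {V V' : Matrix κ' ν ℝ} (hU : Uᵀ * U = 1)
    (hU' : U'ᵀ * U' = 1) (hV : Vᵀ * V = 1) (hV' : V'ᵀ * V' = 1) (i : ν) :
    ∑ j, |((Uᵀ * U') ⊙ (Vᵀ * V')) i j| ≤ 1 :=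
  sum_abs_hadamard_apply_le_one ((sum_sq_transpose_mul_apply_le hU' i).trans_eq (by simp [hU]))
    ((sum_sq_transpose_mul_apply_le hV' i).trans_eq (by simp [hV]))

lemma sum_sum_mul_le_of_abs_sum_le_one [Fintype ι] [Fintype κ] {c α : ι → ℝ} {d β : κ → ℝ}
    {W : Matrix ι κ ℝ}
    (hcd : ∀ i j, 0 ≤ c i * d j) (hle : ∀ i j, c i * d j ≤ α i + β j) (hα : ∀ i, 0 ≤ α i)
    (hβ : ∀ j, 0 ≤ β j) (hrow : ∀ i, ∑ j, |W i j| ≤ 1) (hcol : ∀ j, ∑ i, |W i j| ≤ 1) :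
    ∑ i, ∑ j, c i * d j * W i j ≤ ∑ i, α i + ∑ j, β j :=
  calc ∑ i, ∑ j, c i * d j * W i j ≤ ∑ i, ∑ j, (α i + β j) * |W i j| :=
        Finset.sum_le_sum fun i _ => Finset.sum_le_sum fun j _ =>
          (mul_le_mul_of_nonneg_left (le_abs_self _) (hcd i j)).trans
            (mul_le_mul_of_nonneg_right (hle i j) (abs_nonneg _))
    _ = ∑ i, α i * ∑ j, |W i j| + ∑ j, β j * ∑ i, |W i j| := by
        simp only [add_mul, Finset.sum_add_distrib, Finset.mul_sum]
        rw [Finset.sum_comm (f := fun i j => β j * |W i j|)]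
    _ ≤ ∑ i, α i + ∑ j, β j :=
        add_le_add (Finset.sum_le_sum fun i _ => mul_le_of_le_one_right (hα i) (hrow i))
          (Finset.sum_le_sum fun j _ => mul_le_of_le_one_right (hβ j) (hcol j))

end Frobenius

section FrobeniusFin

variable {n m k p : ℕ}

lemma frobSq_eq_frobInner (A : Matrix (Fin n) (Fin m) ℝ) : frobSq A = frobInner A A := by
  simp only [frobSq, frobInner, sq]

lemma frobSq_sub (A B : Matrix (Fin n) (Fin m) ℝ) :
    frobSq (A - B) = frobSq A - 2 * frobInner A B + frobSq B := by
  simp only [frobSq, frobInner, Matrix.sub_apply, Finset.mul_sum, ← Finset.sum_sub_distrib,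
    ← Finset.sum_add_distrib]
  exact Finset.sum_congr rfl fun i _ => Finset.sum_congr rfl fun j _ => by ring

lemma frobSq_sub_comm (A B : Matrix (Fin n) (Fin m) ℝ) : frobSq (A - B) = frobSq (B - A) := by
  simp only [frobSq, Matrix.sub_apply]
  exact Finset.sum_congr rfl fun i _ => Finset.sum_congr rfl fun j _ => by ring

lemma two_mul_frobInner_sub_sub (A B C : Matrix (Fin n) (Fin m) ℝ) :
    2 * frobInner (A - C) (B - A) = frobSq (C - B) - frobSq (C - A) - frobSq (B - A) := by
  simp only [frobSq, frobInner, Matrix.sub_apply, Finset.mul_sum, ← Finset.sum_sub_distrib]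
  exact Finset.sum_congr rfl fun i _ => Finset.sum_congr rfl fun j _ => by ring

lemma frobInner_svd_of_orthonormal {U : Matrix (Fin n) (Fin k) ℝ} {V : Matrix (Fin m) (Fin k) ℝ}
    (hU : Uᵀ * U = 1) (hV : Vᵀ * V = 1) (c d : Fin k → ℝ) :
    frobInner (U * diagonal c * Vᵀ) (U * diagonal d * Vᵀ) = ∑ i, c i * d i := by
  simp [frobInner_svd, hU, hV, hadamard_apply, one_apply]

lemma sum_mulVec_sq_le (X : Matrix (Fin n) (Fin p) ℝ) (v : Fin p → ℝ) :
    ∑ i, (X *ᵥ v) i ^ 2 ≤ spectralNormSq X * ∑ j, v j ^ 2 := by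
  have h := (LinearMap.toContinuousLinearMap (toEuclideanLin X)).le_opNorm (WithLp.toLp 2 v)
  have h2 := pow_le_pow_left₀ (norm_nonneg _) h 2
  simpa only [LinearMap.coe_toContinuousLinearMap', toLpLin_toLp, toLin'_apply, mul_pow,
    EuclideanSpace.real_norm_sq_eq, spectralNormSq] using h2

lemma frobSq_mul_le (X : Matrix (Fin n) (Fin p) ℝ) (D : Matrix (Fin p) (Fin m) ℝ) :
    frobSq (X * D) ≤ spectralNormSq X * frobSq D := by
  simp only [frobSq]
  rw [Finset.sum_comm, Finset.sum_comm (f := fun i j => D i j ^ 2), Finset.mul_sum]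
  exact Finset.sum_le_sum fun j _ => sum_mulVec_sq_le X fun i => D i j

end FrobeniusFin

section Logistic

variable {n p m : ℕ} (X : Matrix (Fin n) (Fin p) ℝ) (Y : Matrix (Fin n) (Fin m) ℝ)

lemma logisticMu_apply (B : Matrix (Fin p) (Fin m) ℝ) (i : Fin n) (k : Fin m) :
    logisticMu X B i k = sigmoid ((X * B) i k) := by
  rw [logisticMu, of_apply, one_div, sigmoid_def]

lemma logisticNegLogLik_eq_sum (B : Matrix (Fin p) (Fin m) ℝ) :
    logisticNegLogLik X Y B
      = ∑ i, ∑ k, (log (1 + exp ((X * B) i k)) - Y i k * (X * B) i k) := by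
  rw [logisticNegLogLik, Finset.sum_comm, ← Finset.sum_neg_distrib]
  simp only [← Finset.sum_neg_distrib, neg_sub]

theorem logisticNegLogLik_le (B B' : Matrix (Fin p) (Fin m) ℝ) :
    logisticNegLogLik X Y B' ≤ logisticNegLogLik X Y B
      + frobInner (logisticMu X B - Y) (X * (B' - B)) + frobSq (X * (B' - B)) / 8 := by
  simp only [logisticNegLogLik_eq_sum, frobInner, frobSq, Finset.sum_div,
    ← Finset.sum_add_distrib]
  refine Finset.sum_le_sum fun i _ => Finset.sum_le_sum fun k _ => ?_
  rw [Matrix.mul_sub, Matrix.sub_apply, Matrix.sub_apply, logisticMu_apply]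
  linarith [log_one_add_exp_le ((X * B) i k) ((X * B') i k)]

theorem logisticNegLogLik_le_add_spectralNormSq (B B' : Matrix (Fin p) (Fin m) ℝ) :
    logisticNegLogLik X Y B' ≤ logisticNegLogLik X Y B
      + frobInner (Xᵀ * (logisticMu X B - Y)) (B' - B)
      + spectralNormSq X / 8 * frobSq (B' - B) := by
  rw [frobInner_transpose_mul_left]
  linarith [logisticNegLogLik_le X Y B B', frobSq_mul_le X (B' - B)]

end Logistic

noncomputable def thresholdInv (f : ℝ → ℝ) (u : ℝ) : ℝ := sSup {s | f s ≤ u}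

-- By (constrP), `P θ - P 0 = thresholdPenalty (Θ · λ) q θ` for `θ ≥ 0`.
noncomputable def thresholdPenalty (f q : ℝ → ℝ) (θ : ℝ) : ℝ :=
  (∫ u in (0 : ℝ)..θ, (thresholdInv f u - u)) + q θ

section ThresholdInv

variable {f : ℝ → ℝ} {L a u x : ℝ}

lemma apply_zero_of_bound (hf_bound : ∀ t, 0 ≤ t → 0 ≤ f t ∧ f t ≤ t) : f 0 = 0 :=
  le_antisymm (hf_bound 0 le_rfl).2 (hf_bound 0 le_rfl).1

lemma bddAbove_setOf_le_of_tendsto (hf : Tendsto f atTop atTop) (u : ℝ) :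
    BddAbove {s | f s ≤ u} := by
  obtain ⟨t, ht⟩ := eventually_atTop.1 (hf.eventually_gt_atTop u)
  exact ⟨t, fun s hs => le_of_not_gt fun hts => (ht s hts.le).not_ge hs⟩

lemma le_thresholdInv (hf : Tendsto f atTop atTop) (h : f x ≤ u) : x ≤ thresholdInv f u :=
  le_csSup (bddAbove_setOf_le_of_tendsto hf u) h

lemma self_le_thresholdInv (hf : Tendsto f atTop atTop) (hf_le : ∀ t, 0 ≤ t → f t ≤ t)
    (hu : 0 ≤ u) : u ≤ thresholdInv f u :=
  le_thresholdInv hf (hf_le u hu)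

lemma thresholdInv_le (hf : Monotone f) (hf0 : f 0 = 0) (hu : 0 ≤ u) (hua : u < f a) :
    thresholdInv f u ≤ a :=
  csSup_le ⟨0, by simpa [hf0] using hu⟩ fun _ hs => le_of_not_gt fun has =>
    (hua.trans_le (hf has.le)).not_ge hs

lemma thresholdInv_monotoneOn (hf_top : Tendsto f atTop atTop) (hf0 : f 0 = 0) :
    MonotoneOn (thresholdInv f) (Ici 0) := fun u hu _ _ huv =>
  csSup_le_csSup (bddAbove_setOf_le_of_tendsto hf_top _) ⟨0, by simpa [hf0] using hu⟩
    fun _ hs => le_trans hs huv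

lemma intervalIntegrable_thresholdInv_sub (hf_top : Tendsto f atTop atTop) (hf0 : f 0 = 0)
    {x y : ℝ} (hx : 0 ≤ x) (hy : 0 ≤ y) :
    IntervalIntegrable (fun u => thresholdInv f u - u) MeasureTheory.volume x y :=
  (((thresholdInv_monotoneOn hf_top hf0).mono fun _ hz =>
    le_trans (le_min hx hy) hz.1).intervalIntegrable).sub (continuous_id.intervalIntegrable x y)

-- Monotonicity on `(0, ∞)` extends to `0` because `thresholdInv f` is nondecreasing on `[0, ∞)`.
lemma monotoneOn_Ici_thresholdInv_sub (hf_top : Tendsto f atTop atTop) (hf0 : f 0 = 0)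
    (hL : MonotoneOn (fun u => thresholdInv f u - (1 - L) * u) (Ioi 0)) :
    MonotoneOn (fun u => thresholdInv f u - (1 - L) * u) (Ici 0) := by
  intro u hu v hv huv
  rcases (mem_Ici.1 hu).eq_or_lt with rfl | hu₀
  · rcases (mem_Ici.1 hv).eq_or_lt with rfl | hv₀
    · rfl
    have hlim : Tendsto (fun w => thresholdInv f v - (1 - L) * v + (1 - L) * w) (𝓝[>] 0)
        (𝓝 (thresholdInv f v - (1 - L) * v + (1 - L) * 0)) :=
      ((continuous_const.add (continuous_const.mul continuous_id)).tendsto 0).mono_left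
        nhdsWithin_le_nhds
    rw [mul_zero, add_zero] at hlim
    refine ge_of_tendsto hlim ?_
    filter_upwards [Ioc_mem_nhdsGT hv₀] with w ⟨hw₀, hwv⟩
    have h0w := thresholdInv_monotoneOn hf_top hf0 self_mem_Ici hw₀.le hw₀.le
    have hwv := hL hw₀ hv₀ hwv
    simp only at hwv ⊢
    linarith
  · exact hL hu₀ (lt_of_lt_of_le hu₀ huv) huv

end ThresholdInv

section Prox

variable {f q : ℝ → ℝ} {L a : ℝ}

lemma sub_le_thresholdInv_sub (hf_top : Tendsto f atTop atTop) (hf0 : f 0 = 0)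
    (hL : MonotoneOn (fun u => thresholdInv f u - (1 - L) * u) (Ioi 0)) (ha : 0 ≤ f a)
    {u : ℝ} (hu : f a ≤ u) : a - (1 - L) * f a ≤ thresholdInv f u - (1 - L) * u :=
  calc a - (1 - L) * f a ≤ thresholdInv f (f a) - (1 - L) * f a := by
        linarith [le_thresholdInv hf_top (le_refl (f a))]
    _ ≤ _ := monotoneOn_Ici_thresholdInv_sub hf_top hf0 hL ha (ha.trans hu) hu

lemma thresholdInv_sub_le (hf : Monotone f) (hf_top : Tendsto f atTop atTop) (hf0 : f 0 = 0)
    (hL : MonotoneOn (fun u => thresholdInv f u - (1 - L) * u) (Ioi 0))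
    {u : ℝ} (hu : 0 ≤ u) (hua : u < f a) : thresholdInv f u - (1 - L) * u ≤ a - (1 - L) * f a := by
  have hlim : Tendsto (fun v => a - (1 - L) * v) (𝓝[<] f a) (𝓝 (a - (1 - L) * f a)) :=
    ((continuous_const.sub (continuous_const.mul continuous_id)).tendsto (f a)).mono_left
      nhdsWithin_le_nhds
  refine ge_of_tendsto hlim ?_
  filter_upwards [Ioo_mem_nhdsLT hua] with v ⟨huv, hva⟩
  have hv := monotoneOn_Ici_thresholdInv_sub hf_top hf0 hL hu (hu.trans huv.le) huv.le
  simp only at hv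
  linarith [thresholdInv_le hf hf0 (hu.trans huv.le) hva]

lemma integral_affine_le_integral_thresholdInv_sub (hf : Monotone f)
    (hf_top : Tendsto f atTop atTop) (hf0 : f 0 = 0)
    (hL : MonotoneOn (fun u => thresholdInv f u - (1 - L) * u) (Ioi 0)) (ha : 0 ≤ f a)
    {b : ℝ} (hb : 0 ≤ b) :
    ∫ u in f a..b, (a - (1 - L) * f a - L * u) ≤ ∫ u in f a..b, (thresholdInv f u - u) := by
  have hlin : ∀ x y : ℝ, IntervalIntegrable (fun u => a - (1 - L) * f a - L * u)
      MeasureTheory.volume x y := fun x y => by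
    apply Continuous.intervalIntegrable
    fun_prop
  rcases le_total (f a) b with hab | hba
  · refine integral_mono_on hab (hlin _ _) (intervalIntegrable_thresholdInv_sub hf_top hf0 ha hb)
      fun u hu => ?_
    linarith [sub_le_thresholdInv_sub hf_top hf0 hL ha hu.1]
  · rw [integral_symm b (f a), integral_symm b (f a), neg_le_neg_iff]
    refine integral_mono_on_of_le_Ioo hba (intervalIntegrable_thresholdInv_sub hf_top hf0 hb ha)
      (hlin _ _) fun u hu => ?_
    linarith [thresholdInv_sub_le hf hf_top hf0 hL (hb.trans hu.1.le) hu.2]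

theorem thresholdPenalty_prox (hf : Monotone f) (hf_top : Tendsto f atTop atTop)
    (hf_bound : ∀ t, 0 ≤ t → 0 ≤ f t ∧ f t ≤ t)
    (hL : MonotoneOn (fun u => thresholdInv f u - (1 - L) * u) (Ioi 0))
    (hq : ∀ θ, 0 ≤ q θ) (hqa : q (f a) = 0) (ha : 0 ≤ a) {b : ℝ} (hb : 0 ≤ b) :
    (a - f a) ^ 2 / 2 + thresholdPenalty f q (f a) + (1 - L) / 2 * (b - f a) ^ 2
      ≤ (a - b) ^ 2 / 2 + thresholdPenalty f q b := by
  have hf0 := apply_zero_of_bound hf_bound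
  have hfa := (hf_bound a ha).1
  have hcmp := integral_affine_le_integral_thresholdInv_sub hf hf_top hf0 hL hfa hb
  have hlin : ∫ u in f a..b, (a - (1 - L) * f a - L * u)
      = (a - (1 - L) * f a) * (b - f a) - L * (b ^ 2 - f a ^ 2) / 2 := by
    rw [integral_sub intervalIntegrable_const ((continuous_const_mul L).intervalIntegrable _ _),
      integral_const, integral_const_mul, integral_id, smul_eq_mul]
    ring
  have hsplit : thresholdPenalty f q b - thresholdPenalty f q (f a)
      = (∫ u in f a..b, (thresholdInv f u - u)) + q b := by
    rw [thresholdPenalty, thresholdPenalty, hqa, ← integral_interval_sub_left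
      (intervalIntegrable_thresholdInv_sub hf_top hf0 le_rfl hb)
      (intervalIntegrable_thresholdInv_sub hf_top hf0 le_rfl hfa)]
    ring
  linarith [hq b]

lemma thresholdPenalty_zero (hf_bound : ∀ t, 0 ≤ t → 0 ≤ f t ∧ f t ≤ t)
    (hq : ∀ t, q (f t) = 0) : thresholdPenalty f q 0 = 0 := by
  simpa [thresholdPenalty, apply_zero_of_bound hf_bound] using hq 0

lemma thresholdPenalty_nonneg (hf_top : Tendsto f atTop atTop)
    (hf_bound : ∀ t, 0 ≤ t → 0 ≤ f t ∧ f t ≤ t) (hq : ∀ θ, 0 ≤ q θ) {θ : ℝ} (hθ : 0 ≤ θ) :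
    0 ≤ thresholdPenalty f q θ :=
  add_nonneg (integral_nonneg hθ fun _ hu =>
    sub_nonneg.2 (self_le_thresholdInv hf_top (fun t ht => (hf_bound t ht).2) hu.1)) (hq θ)

end Prox

section ThresholdingSVD

variable {n m k : ℕ}

lemma frobInner_svd_le {U U' : Matrix (Fin n) (Fin k) ℝ} {V V' : Matrix (Fin m) (Fin k) ℝ}
    (hU : Uᵀ * U = 1) (hU' : U'ᵀ * U' = 1) (hV : Vᵀ * V = 1) (hV' : V'ᵀ * V' = 1)
    {c d α β : Fin k → ℝ} (hcd : ∀ i j, 0 ≤ c i * d j) (hle : ∀ i j, c i * d j ≤ α i + β j)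
    (hα : ∀ i, 0 ≤ α i) (hβ : ∀ j, 0 ≤ β j) :
    frobInner (U * diagonal c * Vᵀ) (U' * diagonal d * V'ᵀ) ≤ ∑ i, α i + ∑ j, β j := by
  have hcol : ∀ j, ∑ i, |((Uᵀ * U') ⊙ (Vᵀ * V')) i j| ≤ 1 := fun j => by
    convert sum_abs_hadamard_transpose_mul_le_one hU' hU hV' hV j using 3 with i
    simp only [hadamard_apply, ← transpose_apply (Uᵀ * U'), ← transpose_apply (Vᵀ * V'),
      transpose_mul, transpose_transpose]
  rw [frobInner_svd]
  exact sum_sum_mul_le_of_abs_sum_le_one hcd hle hα hβ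
    (sum_abs_hadamard_transpose_mul_le_one hU hU' hV hV') hcol

theorem svdThreshold_prox {f pen : ℝ → ℝ} {L : ℝ} (hL : 0 ≤ L)
    (hf : ∀ t, 0 ≤ t → 0 ≤ f t ∧ f t ≤ t)
    (hprox : ∀ a b, 0 ≤ a → 0 ≤ b →
      (a - f a) ^ 2 / 2 + pen (f a) + (1 - L) / 2 * (b - f a) ^ 2 ≤ (a - b) ^ 2 / 2 + pen b)
    (hpen : ∀ b, 0 ≤ b → 0 ≤ pen b) (hpen0 : pen 0 = 0)
    {U U' : Matrix (Fin n) (Fin k) ℝ} {V V' : Matrix (Fin m) (Fin k) ℝ}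
    (hU : Uᵀ * U = 1) (hU' : U'ᵀ * U' = 1) (hV : Vᵀ * V = 1) (hV' : V'ᵀ * V' = 1)
    {a b : Fin k → ℝ} (ha : ∀ i, 0 ≤ a i) (hb : ∀ i, 0 ≤ b i) :
    frobSq (U * diagonal a * Vᵀ - U * diagonal (fun i => f (a i)) * Vᵀ) / 2
        + ∑ i, pen (f (a i))
        + (1 - L) / 2 * frobSq (U' * diagonal b * V'ᵀ - U * diagonal (fun i => f (a i)) * Vᵀ)
      ≤ frobSq (U * diagonal a * Vᵀ - U' * diagonal b * V'ᵀ) / 2 + ∑ i, pen (b i) := by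
  set θ : Fin k → ℝ := fun i => f (a i)
  set α : Fin k → ℝ := fun i => a i * θ i - (2 - L) / 2 * (θ i * θ i) - pen (θ i)
  set β : Fin k → ℝ := fun j => L / 2 * (b j * b j) + pen (b j)
  have hθ : ∀ i, 0 ≤ θ i := fun i => (hf _ (ha i)).1
  have hsep : ∀ i j, (a i - (1 - L) * θ i) * b j ≤ α i + β j := fun i j => by
    linear_combination hprox (a i) (b j) (ha i) (hb j)
  have hα : ∀ i, 0 ≤ α i := fun i => by
    linear_combination hprox (a i) 0 (ha i) le_rfl + hpen0
  have hβ : ∀ j, 0 ≤ β j := fun j =>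
    add_nonneg (by have := mul_self_nonneg (b j); positivity) (hpen _ (hb j))
  have hcross : frobInner (U * diagonal a * Vᵀ) (U' * diagonal b * V'ᵀ)
      - (1 - L) * frobInner (U * diagonal θ * Vᵀ) (U' * diagonal b * V'ᵀ)
      ≤ ∑ i, α i + ∑ j, β j := by
    have hc : ∀ i, 0 ≤ a i - (1 - L) * θ i := fun i => by nlinarith [hθ i, (hf _ (ha i)).2]
    refine le_of_eq_of_le ?_ (frobInner_svd_le hU hU' hV hV'
      (fun i j => mul_nonneg (hc i) (hb j)) hsep hα hβ)
    simp only [frobInner_svd, Finset.mul_sum, ← Finset.sum_sub_distrib]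
    exact Finset.sum_congr rfl fun i _ => Finset.sum_congr rfl fun j _ => by ring
  rw [frobSq_sub, frobSq_sub, frobSq_sub, frobInner_comm (U' * _ * _), frobSq_eq_frobInner,
    frobSq_eq_frobInner, frobSq_eq_frobInner, frobInner_svd_of_orthonormal hU hV,
    frobInner_svd_of_orthonormal hU hV, frobInner_svd_of_orthonormal hU hV,
    frobInner_svd_of_orthonormal hU' hV']
  simp only [α, β, Finset.sum_add_distrib, Finset.sum_sub_distrib, ← Finset.mul_sum] at hcross
  linarith

end ThresholdingSVD

theorem descent_logistic_iteration_general {n p m : ℕ}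
    (Θ : ℝ → ℝ → ℝ) (hΘ : IsThresholdFunction Θ) (lam : ℝ) (hlam : 0 ≤ lam)
    (L : ℝ) (hL0 : 0 ≤ L)
    (hLmono : ∀ u v : ℝ, 0 < u → u ≤ v →
      sSup {s : ℝ | Θ s lam ≤ u} - (1 - L) * u ≤ sSup {s : ℝ | Θ s lam ≤ v} - (1 - L) * v)
    (P q : ℝ → ℝ)
    (hq : ∀ θ : ℝ, 0 ≤ q θ) (hqΘ : ∀ t : ℝ, q (Θ t lam) = 0)
    (hP : ∀ θ : ℝ,
      P θ - P 0 = (∫ u in (0:ℝ)..|θ|, (sSup {s : ℝ | Θ s lam ≤ u} - u)) + q θ)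
    (Y : Matrix (Fin n) (Fin m) ℝ)
    (X : Matrix (Fin n) (Fin p) ℝ)
    (B : ℕ → Matrix (Fin p) (Fin m) ℝ)
    (U : ℕ → Matrix (Fin p) (Fin (min p m)) ℝ)
    (σ : ℕ → Fin (min p m) → ℝ)
    (V : ℕ → Matrix (Fin m) (Fin (min p m)) ℝ)
    (hSVD : ∀ j : ℕ,
      IsSVD (B j + Xᵀ * Y - Xᵀ * logisticMu X (B j)) (U j) (σ j) (V j))
    (hiter : ∀ j : ℕ, B (j + 1) = U j * diagonal (fun i => Θ (σ j i) lam) * (V j)ᵀ) :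
    ∀ j : ℕ,
      (logisticNegLogLik X Y (B (j + 1)) + ∑ i, P (Θ (σ j i) lam))
          - (logisticNegLogLik X Y (B (j + 2)) + ∑ i, P (Θ (σ (j + 1) i) lam))
        ≥ (2 - L - spectralNormSq X / 4) / 2 * frobSq (B (j + 1) - B (j + 2)) := by
  intro j
  obtain ⟨-, hmono, htop, hbnd⟩ := hΘ lam hlam
  set Ξ := B (j + 1) + Xᵀ * Y - Xᵀ * logisticMu X (B (j + 1)) with hΞ_def
  obtain ⟨hU₀, hV₀, -, hσ₀, -⟩ := hSVD j
  obtain ⟨hU₁, hV₁, -, hσ₁, hΞ⟩ := hSVD (j + 1)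
  have hθ₀ : ∀ i, 0 ≤ Θ (σ j i) lam := fun i => (hbnd _ (hσ₀ i)).1
  have hP' : ∀ θ, 0 ≤ θ → P θ = P 0 + thresholdPenalty (Θ · lam) q θ := fun θ hθ => by
    have := hP θ
    rw [abs_of_nonneg hθ] at this
    exact eq_add_of_sub_eq' this
  have hprox := svdThreshold_prox (pen := thresholdPenalty (Θ · lam) q) hL0 hbnd
    (fun a b ha hb => thresholdPenalty_prox hmono htop hbnd
      (fun u hu v _ huv => hLmono u v hu huv) hq (hqΘ a) ha hb)
    (fun b hb => thresholdPenalty_nonneg htop hbnd hq hb) (thresholdPenalty_zero hbnd hqΘ)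
    hU₁ hU₀ hV₁ hV₀ hσ₁ hθ₀
  have hB₂ : B (j + 2) = _ := hiter (j + 1)
  rw [← hΞ, ← hB₂, ← hiter j] at hprox
  have hmaj := logisticNegLogLik_le_add_spectralNormSq X Y (B (j + 1)) (B (j + 2))
  rw [show Xᵀ * (logisticMu X (B (j + 1)) - Y) = B (j + 1) - Ξ by
    rw [hΞ_def, Matrix.mul_sub]; abel] at hmaj
  have hpolar := two_mul_frobInner_sub_sub (B (j + 1)) (B (j + 2)) Ξ
  rw [Finset.sum_congr rfl fun i _ => hP' _ (hθ₀ i),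
    Finset.sum_congr rfl fun i _ => hP' _ (hbnd _ (hσ₁ i)).1, Finset.sum_add_distrib,
    Finset.sum_add_distrib, frobSq_sub_comm]
  rw [frobSq_sub_comm (B (j + 1))] at hprox
  linarith

/-- Descent property of the singular-value penalized iteration (logistic case): with binary
responses, `‖X‖₂² < 4(2 − L_Θ)`, and iterates
`B⁽ʲ⁺¹⁾ = Θ^σ(B⁽ʲ⁾ + XᵀY − Xᵀμ(B⁽ʲ⁾); λ)` (given via an SVD `(U j, σ j, V j)` of the
argument at each step), the objective
`F(B) = −∑_{k,i}(y_{ik} x_iᵀb_k − log(1+exp(x_iᵀb_k))) + ∑_s P(σ_s(B);λ)` satisfies, for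
all `j ≥ 1`, `F(B⁽ʲ⁾) − F(B⁽ʲ⁺¹⁾) ≥ (C/2)‖B⁽ʲ⁾ − B⁽ʲ⁺¹⁾‖_F²` with
`C = 2 − L_Θ − ‖X‖₂²/4`; in particular `F(B⁽ʲ⁾)` is nonincreasing. -/
theorem descent_logistic_iteration {n p m : ℕ}
    (Θ : ℝ → ℝ → ℝ) (hΘ : IsThresholdFunction Θ) (lam : ℝ) (hlam : 0 ≤ lam)
    (L : ℝ) (hL0 : 0 ≤ L) (hL1 : L ≤ 1)
    (hLmono : ∀ u v : ℝ, 0 < u → u ≤ v →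
      sSup {s : ℝ | Θ s lam ≤ u} - (1 - L) * u ≤ sSup {s : ℝ | Θ s lam ≤ v} - (1 - L) * v)
    (P q : ℝ → ℝ)
    (hq : ∀ θ : ℝ, 0 ≤ q θ) (hqΘ : ∀ t : ℝ, q (Θ t lam) = 0)
    (hP : ∀ θ : ℝ,
      P θ - P 0 = (∫ u in (0:ℝ)..|θ|, (sSup {s : ℝ | Θ s lam ≤ u} - u)) + q θ)
    (Y : Matrix (Fin n) (Fin m) ℝ) (hY : ∀ i k, Y i k = 0 ∨ Y i k = 1)
    (X : Matrix (Fin n) (Fin p) ℝ)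
    (hX : spectralNormSq X < 4 * (2 - L))
    (B : ℕ → Matrix (Fin p) (Fin m) ℝ)
    (U : ℕ → Matrix (Fin p) (Fin (min p m)) ℝ)
    (σ : ℕ → Fin (min p m) → ℝ)
    (V : ℕ → Matrix (Fin m) (Fin (min p m)) ℝ)
    (hSVD : ∀ j : ℕ,
      IsSVD (B j + Xᵀ * Y - Xᵀ * logisticMu X (B j)) (U j) (σ j) (V j))
    (hiter : ∀ j : ℕ, B (j + 1) = U j * diagonal (fun i => Θ (σ j i) lam) * (V j)ᵀ) :
    ∀ j : ℕ,
      (logisticNegLogLik X Y (B (j + 1)) + ∑ i, P (Θ (σ j i) lam))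
          - (logisticNegLogLik X Y (B (j + 2)) + ∑ i, P (Θ (σ (j + 1) i) lam))
        ≥ (2 - L - spectralNormSq X / 4) / 2 * frobSq (B (j + 1) - B (j + 2)) :=
  descent_logistic_iteration_general Θ hΘ lam hlam L hL0 hLmono P q hq hqΘ hP Y X B U σ V hSVD hiter
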